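/- arXiv:2210.12225 — 2 statements merged into one kernel-verified Lean document; each statement's English description precedes it below -/
import Mathlib

section
/- Every local blowing up can be decomposed as a finite sequence of simple local blowing ups: let K be a field, V a valuation subring of K with maximal ideal m_V, and S a subring of V whose field of fractions is K. If S^{(1)} is a local blowing up of S with respect to V, then there exist n ≥ 1 and a chain of subrings S = T_0 ⊆ T_1 ⊆ ⋯ ⊆ T_n = S^{(1)} of K such that for each 0 ≤ m < n, T_{m+1} is a simple local blowing up of T_m with respect to V (in particular each T_m with m ≥ 1 is a subring of V with field of fractions K). -/
universe u

variable {K : Type u} [Field K]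

/-- The subring `S[a_1/b_1, …, a_s/b_s]` of `K` generated by a subring `S` and finitely many
fractions of its elements. -/
def adjoinFracs (S : Subring K) {s : ℕ} (a b : Fin s → K) : Subring K :=
  Subring.closure ((S : Set K) ∪ Set.range fun i => a i / b i)

/-- `T` is the local blowing up of `S` with respect to the valuation subring `V` determined by
the data `a i / b i`: `T = { x/y : x, y ∈ S[a_1/b_1, …, a_s/b_s], y ∉ m_V }`. -/
def IsLocalBlowupBy (V : ValuationSubring K) (S T : Subring K) {s : ℕ}
    (a b : Fin s → K) : Prop :=
  (∀ i, a i ∈ S) ∧ (∀ i, b i ∈ S) ∧ (∀ i, b i ≠ 0) ∧ (∀ i, a i / b i ∈ V) ∧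
    ∀ x : K, x ∈ T ↔ ∃ y z : K,
      y ∈ adjoinFracs S a b ∧ z ∈ adjoinFracs S a b ∧ z ∉ V.nonunits ∧ x = y / z

/-- `T` is a local blowing up of `S` with respect to `V`. -/
def IsLocalBlowup (V : ValuationSubring K) (S T : Subring K) : Prop :=
  ∃ (s : ℕ) (a b : Fin s → K), IsLocalBlowupBy V S T a b

/-- `T` is a simple local blowing up of `S` with respect to `V` (the case `s = 1`). -/
def IsSimpleLocalBlowup (V : ValuationSubring K) (S T : Subring K) : Prop :=
  ∃ a b : Fin 1 → K, IsLocalBlowupBy V S T a b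

/-- The subring `S` of `K` has `K` as its field of fractions. -/
def SubringHasFracK (S : Subring K) : Prop :=
  ∀ x : K, ∃ a b : K, a ∈ S ∧ b ∈ S ∧ b ≠ 0 ∧ x = a / b

lemma not_mem_nonunits_iff (V : ValuationSubring K) {z : K} :
    z ∉ V.nonunits ↔ 1 ≤ V.valuation z := by
  rw [ValuationSubring.mem_nonunits_iff, not_lt]

lemma ne_zero_of_not_mem_nonunits (V : ValuationSubring K) {z : K} (hz : z ∉ V.nonunits) :
    z ≠ 0 := by
  rintro rfl
  exact hz (by simp [ValuationSubring.mem_nonunits_iff])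

/-- The ring `{ y/z : y, z ∈ R, z ∉ m_V }`. -/
def blowupRing (V : ValuationSubring K) (R : Subring K) : Subring K where
  carrier := {x | ∃ y z : K, y ∈ R ∧ z ∈ R ∧ z ∉ V.nonunits ∧ x = y / z}
  one_mem' := ⟨1, 1, one_mem R, one_mem R,
    by simp [ValuationSubring.mem_nonunits_iff], by simp⟩
  zero_mem' := ⟨0, 1, zero_mem R, one_mem R,
    by simp [ValuationSubring.mem_nonunits_iff], by simp⟩
  mul_mem' := by
    rintro x₁ x₂ ⟨y₁, z₁, hy₁, hz₁, hz₁', rfl⟩ ⟨y₂, z₂, hy₂, hz₂, hz₂', rfl⟩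
    refine ⟨y₁ * y₂, z₁ * z₂, mul_mem hy₁ hy₂, mul_mem hz₁ hz₂, ?_, by
      rw [div_mul_div_comm]⟩
    rw [not_mem_nonunits_iff] at *
    calc (1 : _) = 1 * 1 := (mul_one 1).symm
    _ ≤ V.valuation z₁ * V.valuation z₂ := mul_le_mul' hz₁' hz₂'
    _ = V.valuation (z₁ * z₂) := (map_mul _ _ _).symm
  add_mem' := by
    rintro x₁ x₂ ⟨y₁, z₁, hy₁, hz₁, hz₁', rfl⟩ ⟨y₂, z₂, hy₂, hz₂, hz₂', rfl⟩
    refine ⟨y₁ * z₂ + y₂ * z₁, z₁ * z₂, add_mem (mul_mem hy₁ hz₂) (mul_mem hy₂ hz₁),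
      mul_mem hz₁ hz₂, ?_, ?_⟩
    · rw [not_mem_nonunits_iff] at *
      calc (1 : _) = 1 * 1 := (mul_one 1).symm
      _ ≤ V.valuation z₁ * V.valuation z₂ := mul_le_mul' hz₁' hz₂'
      _ = V.valuation (z₁ * z₂) := (map_mul _ _ _).symm
    · rw [div_add_div _ _ (ne_zero_of_not_mem_nonunits V hz₁')
        (ne_zero_of_not_mem_nonunits V hz₂'), mul_comm y₂ z₁]
  neg_mem' := by
    rintro x ⟨y, z, hy, hz, hz', rfl⟩
    exact ⟨-y, z, neg_mem hy, hz, hz', (neg_div _ _).symm⟩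

lemma mem_blowupRing {V : ValuationSubring K} {R : Subring K} {x : K} :
    x ∈ blowupRing V R ↔ ∃ y z : K, y ∈ R ∧ z ∈ R ∧ z ∉ V.nonunits ∧ x = y / z :=
  Iff.rfl

lemma le_blowupRing (V : ValuationSubring K) (R : Subring K) : R ≤ blowupRing V R :=
  fun x hx => ⟨x, 1, hx, one_mem R, by simp [ValuationSubring.mem_nonunits_iff],
    (div_one x).symm⟩

lemma blowupRing_mono (V : ValuationSubring K) {R R' : Subring K} (h : R ≤ R') :
    blowupRing V R ≤ blowupRing V R' := by
  rintro x ⟨y, z, hy, hz, hz', rfl⟩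
  exact ⟨y, z, h hy, h hz, hz', rfl⟩

lemma blowupRing_idem (V : ValuationSubring K) (R : Subring K) :
    blowupRing V (blowupRing V R) = blowupRing V R := by
  refine le_antisymm ?_ (blowupRing_mono V (le_blowupRing V R))
  rintro x ⟨y, z, ⟨w₁, u₁, hw₁, hu₁, hu₁', rfl⟩, ⟨w₂, u₂, hw₂, hu₂, hu₂', rfl⟩, hz', rfl⟩
  refine ⟨w₁ * u₂, u₁ * w₂, mul_mem hw₁ hu₂, mul_mem hu₁ hw₂, ?_, ?_⟩
  · rw [not_mem_nonunits_iff] at *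
    have hw₂' : 1 ≤ V.valuation w₂ := by
      have := Valuation.map_div V.valuation w₂ u₂
      calc (1 : _) = 1 * 1 := (mul_one 1).symm
      _ ≤ V.valuation (w₂ / u₂) * V.valuation u₂ := mul_le_mul' hz' hu₂'
      _ = V.valuation (w₂ / u₂ * u₂) := (map_mul _ _ _).symm
      _ = V.valuation w₂ := by
          rw [div_mul_cancel₀]
          intro h0
          rw [h0, map_zero] at hu₂'
          exact absurd hu₂' (by simp)
    calc (1 : _) = 1 * 1 := (mul_one 1).symm
    _ ≤ V.valuation u₁ * V.valuation w₂ := mul_le_mul' hu₁' hw₂'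
    _ = V.valuation (u₁ * w₂) := (map_mul _ _ _).symm
  · rw [div_eq_mul_inv (w₁ / u₁), inv_div, div_mul_div_comm]

lemma blowupRing_subset_V (V : ValuationSubring K) {R : Subring K}
    (hRV : (R : Set K) ⊆ (V : Set K)) : ((blowupRing V R : Subring K) : Set K) ⊆ (V : Set K) := by
  rintro x ⟨y, z, hy, hz, hz', rfl⟩
  rw [SetLike.mem_coe, ← ValuationSubring.valuation_le_one_iff]
  rw [not_mem_nonunits_iff] at hz'
  have hy1 : V.valuation y ≤ 1 := (ValuationSubring.valuation_le_one_iff V y).2 (hRV hy)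
  rw [Valuation.map_div]
  rw [div_le_one₀ (lt_of_lt_of_le zero_lt_one hz')]
  exact le_trans hy1 hz'

lemma subset_adjoinFracs (S : Subring K) {s : ℕ} (a b : Fin s → K) :
    S ≤ adjoinFracs S a b :=
  fun _ hx => Subring.subset_closure (Or.inl hx)

lemma frac_mem_adjoinFracs (S : Subring K) {s : ℕ} (a b : Fin s → K) (i : Fin s) :
    a i / b i ∈ adjoinFracs S a b :=
  Subring.subset_closure (Or.inr ⟨i, rfl⟩)

lemma adjoinFracs_le {S T : Subring K} {s : ℕ} {a b : Fin s → K}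
    (hST : S ≤ T) (h : ∀ i, a i / b i ∈ T) : adjoinFracs S a b ≤ T := by
  apply Subring.closure_le.2
  rintro x (hx | ⟨i, rfl⟩)
  · exact hST hx
  · exact h i

lemma adjoinFracs_eq_self {S : Subring K} {s : ℕ} {a b : Fin s → K}
    (h : ∀ i, a i / b i ∈ S) : adjoinFracs S a b = S :=
  le_antisymm (adjoinFracs_le le_rfl h) (subset_adjoinFracs S a b)

/-- Adjoining the first `m` fractions (the later ones are replaced by `1`). -/
def truncAdjoin (S : Subring K) {s : ℕ} (a b : Fin s → K) (m : ℕ) : Subring K :=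
  adjoinFracs S (fun i => if (i : ℕ) < m then a i else 1)
    (fun i => if (i : ℕ) < m then b i else 1)

lemma truncAdjoin_frac {s : ℕ} (a b : Fin s → K) (m : ℕ) (i : Fin s) :
    (if (i : ℕ) < m then a i else 1) / (if (i : ℕ) < m then b i else 1)
      = if (i : ℕ) < m then a i / b i else 1 := by
  split_ifs <;> simp

lemma frac_mem_truncAdjoin (S : Subring K) {s : ℕ} (a b : Fin s → K) {m : ℕ} {i : Fin s}
    (h : (i : ℕ) < m) : a i / b i ∈ truncAdjoin S a b m := by
  have := frac_mem_adjoinFracs S (fun i => if (i : ℕ) < m then a i else 1)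
    (fun i => if (i : ℕ) < m then b i else 1) i
  rwa [truncAdjoin_frac a b m i, if_pos h] at this

/-- The blowup along the first `m` fractions. -/
def truncBlow (V : ValuationSubring K) (S : Subring K) {s : ℕ} (a b : Fin s → K)
    (m : ℕ) : Subring K :=
  if m = 0 then S else blowupRing V (truncAdjoin S a b m)

lemma truncBlow_zero (V : ValuationSubring K) (S : Subring K) {s : ℕ} (a b : Fin s → K) :
    truncBlow V S a b 0 = S := if_pos rfl

lemma truncBlow_eq (V : ValuationSubring K) (S : Subring K) {s : ℕ} (a b : Fin s → K)
    {m : ℕ} (h : m ≠ 0) :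
    truncBlow V S a b m = blowupRing V (truncAdjoin S a b m) := if_neg h

lemma key (V : ValuationSubring K) (S : Subring K)
    (hSV : (S : Set K) ⊆ (V : Set K)) (hSfrac : SubringHasFracK S)
    {s : ℕ} (hs : 1 ≤ s) (a b : Fin s → K)
    (ha : ∀ i, a i ∈ S) (hb : ∀ i, b i ∈ S) (hb0 : ∀ i, b i ≠ 0)
    (hab : ∀ i, a i / b i ∈ V) :
    ∃ n : ℕ, 1 ≤ n ∧ ∃ T : ℕ → Subring K, T 0 = S ∧
      T n = blowupRing V (adjoinFracs S a b) ∧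
      (∀ m, m < n → IsSimpleLocalBlowup V (T m) (T (m + 1))) ∧
      (∀ m, 1 ≤ m → m ≤ n → ((T m : Set K) ⊆ (V : Set K) ∧ SubringHasFracK (T m))) := by
  have hST : ∀ m, S ≤ truncBlow V S a b m := by
    intro m
    by_cases h0 : m = 0
    · subst h0; rw [truncBlow_zero]
    · rw [truncBlow_eq V S a b h0]
      exact le_trans (subset_adjoinFracs S _ _) (le_blowupRing V _)
  have hAT : ∀ m, m ≠ 0 → truncAdjoin S a b m ≤ truncBlow V S a b m := by
    intro m h0
    rw [truncBlow_eq V S a b h0]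
    exact le_blowupRing V _
  have hAmono : ∀ m, truncAdjoin S a b m ≤ truncAdjoin S a b (m + 1) := by
    intro m
    refine adjoinFracs_le (subset_adjoinFracs S _ _) fun i => ?_
    rw [truncAdjoin_frac a b m i]
    split_ifs with h
    · exact frac_mem_truncAdjoin S a b (Nat.lt_succ_of_lt h)
    · exact one_mem _
  have hA_le_V : ∀ m, ((truncAdjoin S a b m : Subring K) : Set K) ⊆ (V : Set K) := by
    intro m
    have : truncAdjoin S a b m ≤ V.toSubring := by
      refine adjoinFracs_le (fun x hx => hSV hx) fun i => ?_
      rw [truncAdjoin_frac a b m i]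
      split_ifs with h
      · exact hab i
      · exact one_mem _
    exact fun x hx => this hx
  refine ⟨s, hs, truncBlow V S a b, truncBlow_zero V S a b, ?_, ?_, ?_⟩
  · have hAs : truncAdjoin S a b s = adjoinFracs S a b := by
      unfold truncAdjoin
      congr 1 <;> funext i <;> exact if_pos i.isLt
    rw [truncBlow_eq V S a b (Nat.one_le_iff_ne_zero.1 hs), hAs]
  · intro m hm
    refine ⟨fun _ => a ⟨m, hm⟩, fun _ => b ⟨m, hm⟩, fun _ => hST m (ha _),
      fun _ => hST m (hb _), fun _ => hb0 _, fun _ => hab _, fun x => ?_⟩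
    have hCle : blowupRing V
        (adjoinFracs (truncBlow V S a b m) (fun _ : Fin 1 => a ⟨m, hm⟩) (fun _ => b ⟨m, hm⟩))
        = blowupRing V (truncAdjoin S a b (m + 1)) := by
      refine le_antisymm ?_ ?_
      · have h1 : adjoinFracs (truncBlow V S a b m)
            (fun _ : Fin 1 => a ⟨m, hm⟩) (fun _ => b ⟨m, hm⟩)
            ≤ blowupRing V (truncAdjoin S a b (m + 1)) := by
          refine adjoinFracs_le ?_ fun _ => ?_
          · by_cases h0 : m = 0
            · subst h0
              rw [truncBlow_zero]
              exact le_trans (subset_adjoinFracs S _ _) (le_blowupRing V _)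
            · rw [truncBlow_eq V S a b h0]
              exact blowupRing_mono V (hAmono m)
          · exact le_blowupRing V _
              (frac_mem_truncAdjoin S a b (i := ⟨m, hm⟩) (Nat.lt_succ_self m))
        calc blowupRing V _ ≤ blowupRing V (blowupRing V (truncAdjoin S a b (m + 1))) :=
              blowupRing_mono V h1
        _ = blowupRing V (truncAdjoin S a b (m + 1)) := blowupRing_idem V _
      · refine blowupRing_mono V ?_
        refine adjoinFracs_le (le_trans (hST m) (subset_adjoinFracs _ _ _)) fun i => ?_
        rw [truncAdjoin_frac a b (m + 1) i]
        split_ifs with h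
        · rcases Nat.lt_succ_iff_lt_or_eq.1 h with h' | h'
          · have hm0 : m ≠ 0 := by omega
            exact subset_adjoinFracs _ _ _ (hAT m hm0 (frac_mem_truncAdjoin S a b h'))
          · have hi : i = ⟨m, hm⟩ := Fin.ext h'
            subst hi
            exact frac_mem_adjoinFracs (truncBlow V S a b m) _ _ 0
        · exact one_mem _
    rw [truncBlow_eq V S a b (Nat.succ_ne_zero m), ← hCle]
    exact mem_blowupRing
  · intro m hm1 _
    rw [truncBlow_eq V S a b (Nat.one_le_iff_ne_zero.1 hm1)]
    constructor
    · exact blowupRing_subset_V V (hA_le_V m)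
    · intro x
      obtain ⟨p, q, hp, hq, hq0, hx⟩ := hSfrac x
      refine ⟨p, q, ?_, ?_, hq0, hx⟩
      · exact le_trans (subset_adjoinFracs S _ _) (le_blowupRing V _) hp
      · exact le_trans (subset_adjoinFracs S _ _) (le_blowupRing V _) hq

/-- Every local blowing up decomposes as a finite sequence of simple local
blowing ups; in particular each intermediate ring is a subring of `V` with field of
fractions `K`. -/
theorem localBlowup_eq_comp_simple
    (V : ValuationSubring K) (S : Subring K)
    (hSV : (S : Set K) ⊆ (V : Set K)) (hSfrac : SubringHasFracK S)
    (S₁ : Subring K) (h : IsLocalBlowup V S S₁) :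
    ∃ n : ℕ, 1 ≤ n ∧ ∃ T : ℕ → Subring K, T 0 = S ∧ T n = S₁ ∧
      (∀ m, m < n → IsSimpleLocalBlowup V (T m) (T (m + 1))) ∧
      (∀ m, 1 ≤ m → m ≤ n → ((T m : Set K) ⊆ (V : Set K) ∧ SubringHasFracK (T m))) := by
  obtain ⟨s, a, b, ha, hb, hb0, hab, hmem⟩ := h
  have hS₁ : S₁ = blowupRing V (adjoinFracs S a b) := by
    ext x
    rw [hmem x]
    exact Iff.rfl
  by_cases hs : s = 0
  · subst hs
    have h1 : adjoinFracs S (fun _ : Fin 1 => (1 : K)) (fun _ => 1) = adjoinFracs S a b := by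
      rw [adjoinFracs_eq_self (fun _ => by simpa using one_mem S),
        adjoinFracs_eq_self (fun i => i.elim0)]
    obtain ⟨n, hn, T, hT0, hTn, hstep, hrest⟩ :=
      key V S hSV hSfrac le_rfl (fun _ : Fin 1 => (1 : K)) (fun _ => 1)
        (fun _ => one_mem S) (fun _ => one_mem S) (fun _ => one_ne_zero)
        (fun _ => by simpa using one_mem V)
    exact ⟨n, hn, T, hT0, by rw [hTn, h1, ← hS₁], hstep, hrest⟩
  · obtain ⟨n, hn, T, hT0, hTn, hstep, hrest⟩ :=
      key V S hSV hSfrac (Nat.one_le_iff_ne_zero.2 hs) a b ha hb hb0 hab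
    exact ⟨n, hn, T, hT0, by rw [hTn, ← hS₁], hstep, hrest⟩
end

section
/- (Well-definedness of the local blowing up along an ideal.) Let K be a field, V a valuation subring of K with maximal ideal m_V, S a Noetherian subring of V whose field of fractions is K, and I a nonzero ideal of S. Suppose u_0, u_1, …, u_s ∈ I generate I as an ideal, u_0 ≠ 0, and u/u_0 ∈ V for every u ∈ I; and likewise suppose u'_0, u'_1, …, u'_t ∈ I generate I, u'_0 ≠ 0, and u/u'_0 ∈ V for every u ∈ I. Then the two associated local blowing ups coincide as subrings of K: { x/y ∈ K : x, y ∈ S[u_1/u_0, …, u_s/u_0], y ∉ m_V } = { x/y ∈ K : x, y ∈ S[u'_1/u'_0, …, u'_t/u'_0], y ∉ m_V }. -/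
universe u

variable {K : Type u} [Field K]

/-- For `w` in the span of the `u i`, `w / u 0` lies in the adjoined ring. -/
lemma mem_adjoin_div (S : Subring K) {t : ℕ} (u : Fin (t + 1) → ↥S)
    (h0 : (u 0 : K) ≠ 0) (w : ↥S) (hw : w ∈ Ideal.span (Set.range u)) :
    (w : K) / (u 0 : K) ∈
      adjoinFracs S (fun i : Fin t => ((u i.succ : K))) (fun _ => (u 0 : K)) := by
  induction hw using Submodule.span_induction with
  | mem x hx =>
    obtain ⟨i, rfl⟩ := hx
    rcases Fin.eq_zero_or_eq_succ i with h | ⟨j, rfl⟩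
    · subst h; rw [div_self h0]; exact one_mem _
    · exact Subring.subset_closure (Or.inr ⟨j, rfl⟩)
  | zero => simpa using zero_mem _
  | add x y hx hy ihx ihy =>
    push_cast
    rw [add_div]
    exact add_mem ihx ihy
  | smul a x hx ih =>
    have : ((a • x : ↥S) : K) / (u 0 : K) = (a : K) * ((x : K) / (u 0 : K)) := by
      rw [smul_eq_mul]; push_cast; ring
    rw [this]
    exact mul_mem (Subring.subset_closure (Or.inl a.2)) ih

/-- For `w ∈ I ^ N`, `w / (u 0) ^ N` lies in the adjoined ring. -/
lemma mem_adjoin_div_pow (S : Subring K) {t : ℕ} (u : Fin (t + 1) → ↥S)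
    (h0 : (u 0 : K) ≠ 0) {I : Ideal ↥S} (hspan : Ideal.span (Set.range u) = I)
    (N : ℕ) (w : ↥S) (hw : w ∈ I ^ N) :
    (w : K) / (u 0 : K) ^ N ∈
      adjoinFracs S (fun i : Fin t => ((u i.succ : K))) (fun _ => (u 0 : K)) := by
  induction N generalizing w with
  | zero =>
    simp only [pow_zero, div_one]
    exact Subring.subset_closure (Or.inl w.2)
  | succ n ih =>
    rw [pow_succ] at hw
    refine Submodule.mul_induction_on hw ?_ ?_
    · intro m hm n' hn'
      have : ((m * n' : ↥S) : K) / (u 0 : K) ^ (n + 1) =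
          ((m : K) / (u 0 : K) ^ n) * ((n' : K) / (u 0 : K)) := by
        push_cast; ring
      rw [this]
      exact mul_mem (ih m hm) (mem_adjoin_div S u h0 n' (hspan ▸ hn'))
    · intro x y hx hy
      push_cast
      rw [add_div]
      exact add_mem hx hy

/-- Every element of the adjoined ring is of the form `Y / (u 0)^N` with `Y ∈ I ^ N`. -/
lemma adjoin_homog (S : Subring K) {t : ℕ} (u : Fin (t + 1) → ↥S)
    (h0 : (u 0 : K) ≠ 0) {I : Ideal ↥S} (hu : ∀ i, u i ∈ I)
    {y : K}
    (hy : y ∈ adjoinFracs S (fun i : Fin t => ((u i.succ : K))) (fun _ => (u 0 : K))) :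
    ∃ (N : ℕ) (Y : ↥S), Y ∈ I ^ N ∧ y = (Y : K) / (u 0 : K) ^ N := by
  induction hy using Subring.closure_induction with
  | mem x hx =>
    rcases hx with hx | ⟨i, rfl⟩
    · exact ⟨0, ⟨x, hx⟩, by simp, by simp⟩
    · exact ⟨1, u i.succ, by simpa using hu i.succ, by simp⟩
  | zero => exact ⟨0, 0, by simp, by simp⟩
  | one => exact ⟨0, 1, by simp, by simp⟩
  | add x y hx hy ihx ihy =>
    obtain ⟨N, Y, hY, rfl⟩ := ihx
    obtain ⟨M, Z, hZ, rfl⟩ := ihy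
    refine ⟨N + M, Y * u 0 ^ M + Z * u 0 ^ N, ?_, ?_⟩
    · refine add_mem ?_ ?_
      · have := Ideal.mul_mem_mul hY (Ideal.pow_mem_pow (hu 0) M)
        rwa [← pow_add] at this
      · have := Ideal.mul_mem_mul hZ (Ideal.pow_mem_pow (hu 0) N)
        rwa [← pow_add, add_comm M N] at this
    · push_cast
      rw [pow_add, div_add_div _ _ (pow_ne_zero N h0) (pow_ne_zero M h0)]
      ring
  | neg x hx ih =>
    obtain ⟨N, Y, hY, rfl⟩ := ih
    exact ⟨N, -Y, neg_mem hY, by push_cast; ring⟩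
  | mul x y hx hy ihx ihy =>
    obtain ⟨N, Y, hY, rfl⟩ := ihx
    obtain ⟨M, Z, hZ, rfl⟩ := ihy
    refine ⟨N + M, Y * Z, ?_, ?_⟩
    · have := Ideal.mul_mem_mul hY hZ
      rwa [← pow_add] at this
    · push_cast; rw [pow_add]; ring

/-- One inclusion between the two local blowing ups. -/
lemma blowup_imp (V : ValuationSubring K) (S : Subring K) {s t : ℕ}
    (u : Fin (s + 1) → ↥S) (u' : Fin (t + 1) → ↥S) {I : Ideal ↥S}
    (hu : ∀ i, u i ∈ I) (hu' : ∀ i, u' i ∈ I)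
    (hspan' : Ideal.span (Set.range u') = I)
    (hu0 : (u 0 : K) ≠ 0) (hu'0 : (u' 0 : K) ≠ 0)
    (hmin : ∀ w : ↥S, w ∈ I → (w : K) / (u 0 : K) ∈ V)
    (hmin' : ∀ w : ↥S, w ∈ I → (w : K) / (u' 0 : K) ∈ V)
    {x : K}
    (h : ∃ y z : K,
        y ∈ adjoinFracs S (fun i : Fin s => ((u i.succ : K))) (fun _ => (u 0 : K)) ∧
        z ∈ adjoinFracs S (fun i : Fin s => ((u i.succ : K))) (fun _ => (u 0 : K)) ∧
        z ∉ V.nonunits ∧ x = y / z) :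
    ∃ y z : K,
        y ∈ adjoinFracs S (fun i : Fin t => ((u' i.succ : K))) (fun _ => (u' 0 : K)) ∧
        z ∈ adjoinFracs S (fun i : Fin t => ((u' i.succ : K))) (fun _ => (u' 0 : K)) ∧
        z ∉ V.nonunits ∧ x = y / z := by
  obtain ⟨y, z, hy, hz, hzn, rfl⟩ := h
  obtain ⟨N, Y, hY, rfl⟩ := adjoin_homog S u hu0 hu hy
  obtain ⟨M, Z, hZ, rfl⟩ := adjoin_homog S u hu0 hu hz
  -- the valuations of `u 0` and `u' 0` agree
  have hv0 : V.valuation (u 0 : K) ≠ 0 := (Valuation.ne_zero_iff _).mpr hu0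
  have hv0' : V.valuation (u' 0 : K) ≠ 0 := (Valuation.ne_zero_iff _).mpr hu'0
  have hval : V.valuation (u 0 : K) = V.valuation (u' 0 : K) := by
    have h1 : V.valuation ((u 0 : K) / (u' 0 : K)) ≤ 1 :=
      (V.valuation_le_one_iff _).mpr (hmin' (u 0) (hu 0))
    have h2 : V.valuation ((u' 0 : K) / (u 0 : K)) ≤ 1 :=
      (V.valuation_le_one_iff _).mpr (hmin (u' 0) (hu' 0))
    rw [map_div₀, div_le_one₀ (zero_lt_iff.mpr hv0')] at h1
    rw [map_div₀, div_le_one₀ (zero_lt_iff.mpr hv0)] at h2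
    exact le_antisymm h1 h2
  have hZ0 : (Z : K) ≠ 0 := by
    intro h
    exact hzn (by simp [ValuationSubring.mem_nonunits_iff, h])
  refine ⟨((Y * u 0 ^ M : ↥S) : K) / (u' 0 : K) ^ (N + M),
    ((Z * u 0 ^ N : ↥S) : K) / (u' 0 : K) ^ (N + M), ?_, ?_, ?_, ?_⟩
  · refine mem_adjoin_div_pow S u' hu'0 hspan' _ _ ?_
    have := Ideal.mul_mem_mul hY (Ideal.pow_mem_pow (hu 0) M)
    rwa [← pow_add] at this
  · refine mem_adjoin_div_pow S u' hu'0 hspan' _ _ ?_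
    have := Ideal.mul_mem_mul hZ (Ideal.pow_mem_pow (hu 0) N)
    rwa [← pow_add, add_comm M N] at this
  · -- the new denominator has the same valuation as the old one
    have heq : V.valuation (((Z * u 0 ^ N : ↥S) : K) / (u' 0 : K) ^ (N + M)) =
        V.valuation ((Z : K) / (u 0 : K) ^ M) := by
      push_cast
      rw [map_div₀, map_div₀, map_mul, map_pow, map_pow, map_pow, ← hval, pow_add,
        ← div_div, mul_div_cancel_right₀ _ (pow_ne_zero N hv0)]
    simp only [ValuationSubring.mem_nonunits_iff] at hzn ⊢
    rw [heq]
    exact hzn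
  · push_cast
    rw [div_div_div_cancel_right₀ (pow_ne_zero (N + M) hu'0)]
    rw [div_div_div_eq, div_eq_div_iff (mul_ne_zero (pow_ne_zero N hu0) hZ0)
      (mul_ne_zero hZ0 (pow_ne_zero N hu0))]
    ring

/-- Well-definedness of the local blowing up of a Noetherian centre along an
ideal: two choices of generators with minimal-valuation leading element yield the same local
blowing up. -/
theorem localBlowup_along_ideal_well_defined
    (V : ValuationSubring K) (S : Subring K)
    (hNoeth : IsNoetherianRing ↥S)
    (hSV : (S : Set K) ⊆ (V : Set K)) (hSfrac : SubringHasFracK S)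
    (I : Ideal ↥S) (hI : I ≠ ⊥)
    (s t : ℕ) (u : Fin (s + 1) → ↥S) (u' : Fin (t + 1) → ↥S)
    (hu : ∀ i, u i ∈ I) (hu' : ∀ i, u' i ∈ I)
    (hspan : Ideal.span (Set.range u) = I) (hspan' : Ideal.span (Set.range u') = I)
    (hu0 : u 0 ≠ 0) (hu'0 : u' 0 ≠ 0)
    (hmin : ∀ w : ↥S, w ∈ I → (w : K) / (u 0 : K) ∈ V)
    (hmin' : ∀ w : ↥S, w ∈ I → (w : K) / (u' 0 : K) ∈ V) :
    ∀ x : K,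
      (∃ y z : K,
        y ∈ adjoinFracs S (fun i : Fin s => ((u i.succ : K))) (fun _ => (u 0 : K)) ∧
        z ∈ adjoinFracs S (fun i : Fin s => ((u i.succ : K))) (fun _ => (u 0 : K)) ∧
        z ∉ V.nonunits ∧ x = y / z) ↔
      (∃ y z : K,
        y ∈ adjoinFracs S (fun i : Fin t => ((u' i.succ : K))) (fun _ => (u' 0 : K)) ∧
        z ∈ adjoinFracs S (fun i : Fin t => ((u' i.succ : K))) (fun _ => (u' 0 : K)) ∧
        z ∉ V.nonunits ∧ x = y / z) := by

  have hu0K : (u 0 : K) ≠ 0 := fun h => hu0 (Subtype.ext h)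
  have hu'0K : (u' 0 : K) ≠ 0 := fun h => hu'0 (Subtype.ext h)
  intro x
  constructor
  · exact fun h => blowup_imp V S u u' hu hu' hspan' hu0K hu'0K hmin hmin' h
  · exact fun h => blowup_imp V S u' u hu' hu hspan hu'0K hu0K hmin' hmin h
end
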